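/- There exists a finite set Λ ⊂ S² ∩ ℚ³ (rational unit vectors in ℝ³) and, for each ξ ∈ Λ, a C^∞ function γ_ξ : B̄_{1/2}(Id) → ℝ defined on the closed ball of radius 1/2 around the identity matrix in the space of symmetric 3×3 real matrices, such that R = Σ_{ξ∈Λ} γ_ξ(R)² (ξ ⊗ ξ) for every symmetric 3×3 matrix R with |R − Id| ≤ 1/2. Moreover, for each ξ ∈ Λ there exists A_ξ ∈ S² ∩ ℚ³ orthogonal to ξ, so that {ξ, A_ξ, ξ × A_ξ} ⊂ S² ∩ ℚ³ is an orthonormal basis of ℝ³, and there exists a smallest natural number n_* such that {n_* ξ, n_* A_ξ, n_* (ξ × A_ξ)} ⊂ ℤ³ for every ξ ∈ Λ. -/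

import Mathlib

open scoped Matrix

noncomputable section

attribute [local instance] Matrix.frobeniusNormedAddCommGroup Matrix.frobeniusNormedSpace

/-- `ℝ³` with its Euclidean norm. -/
abbrev E3' : Type := EuclideanSpace ℝ (Fin 3)

/-- A vector with rational coordinates. -/
def IsRatVec (ξ : E3') : Prop := ∀ j, ∃ q : ℚ, ξ j = (q : ℝ)

/-- A vector with integer coordinates. -/
def IsIntVec (ξ : E3') : Prop := ∀ j, ∃ m : ℤ, ξ j = (m : ℝ)

/-- The cross product on `ℝ³`. -/
def cross3 (u v : E3') : E3' :=
  (EuclideanSpace.equiv (Fin 3) ℝ).symm (crossProduct (fun i => u i) (fun i => v i))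

/-- The tensor product `ξ ⊗ ξ` as a `3×3` matrix. -/
def tens (ξ : E3') : Matrix (Fin 3) (Fin 3) ℝ :=
  Matrix.vecMulVec (fun i => ξ i) (fun i => ξ i)

/-! ### Auxiliary construction -/

/-- Five times the nine direction vectors. -/
def wv : Fin 9 → Fin 3 → ℤ :=
  ![![5,0,0], ![0,5,0], ![0,0,5], ![3,4,0], ![3,-4,0],
    ![4,0,3], ![-4,0,3], ![0,3,4], ![0,3,-4]]

lemma wv_inj : Function.Injective wv := by decide

/-- The nine rational unit vectors. -/
def vv (k : Fin 9) : E3' := (EuclideanSpace.equiv (Fin 3) ℝ).symm (fun i => (wv k i : ℝ)/5)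

@[simp] lemma vv_apply (k : Fin 9) (i : Fin 3) : vv k i = (wv k i : ℝ)/5 := rfl

lemma vv_inj : Function.Injective vv := by
  intro a b h
  apply wv_inj
  funext i
  have hi : ((wv a i : ℝ))/5 = ((wv b i : ℝ))/5 := congrArg (fun v : E3' => v i) h
  field_simp at hi
  exact_mod_cast hi

/-- Five times the orthogonal completions. -/
def uw : Fin 9 → Fin 3 → ℤ :=
  ![![0,5,0], ![0,0,5], ![5,0,0], ![-4,3,0], ![4,3,0],
    ![-3,0,4], ![3,0,4], ![0,-4,3], ![0,4,3]]

/-- The orthogonal completions. -/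
def uu (k : Fin 9) : E3' := (EuclideanSpace.equiv (Fin 3) ℝ).symm (fun i => (uw k i : ℝ)/5)

@[simp] lemma uu_apply (k : Fin 9) (i : Fin 3) : uu k i = (uw k i : ℝ)/5 := rfl

/-- Five times the cross products. -/
def cw : Fin 9 → Fin 3 → ℤ :=
  ![![0,0,5], ![5,0,0], ![0,5,0], ![0,0,5], ![0,0,5],
    ![0,-5,0], ![0,5,0], ![5,0,0], ![5,0,0]]

def cc (k : Fin 9) : E3' := (EuclideanSpace.equiv (Fin 3) ℝ).symm (fun i => (cw k i : ℝ)/5)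

@[simp] lemma cc_apply (k : Fin 9) (i : Fin 3) : cc k i = (cw k i : ℝ)/5 := rfl

lemma cross_vv (k : Fin 9) : cross3 (vv k) (uu k) = cc k := by
  fin_cases k <;>
  · ext i
    fin_cases i <;>
      norm_num [cross3, cross_apply, vv, uu, cc, wv, uw, cw, Matrix.cons_val_two, Matrix.vecHead, Matrix.vecTail]

open Classical in
/-- The index of a vector in the list `vv`. -/
def idx (ξ : E3') : Fin 9 := if h : ∃ k, vv k = ξ then h.choose else 0

lemma idx_vv (k : Fin 9) : idx (vv k) = k := by
  have h : ∃ k', vv k' = vv k := ⟨k, rfl⟩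
  rw [idx, dif_pos h]
  exact vv_inj h.choose_spec

/-- The squared coefficient functions. -/
def Gf (R : Matrix (Fin 3) (Fin 3) ℝ) : Fin 9 → ℝ :=
  ![R 0 0 - 18/25*(17/100 + 2*((R 0 1 + R 1 0)/2)^2) - 32/25*(17/100 + 2*((R 2 0 + R 0 2)/2)^2),
    R 1 1 - 32/25*(17/100 + 2*((R 0 1 + R 1 0)/2)^2) - 18/25*(17/100 + 2*((R 1 2 + R 2 1)/2)^2),
    R 2 2 - 18/25*(17/100 + 2*((R 2 0 + R 0 2)/2)^2) - 32/25*(17/100 + 2*((R 1 2 + R 2 1)/2)^2),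
    (17/100 + 2*((R 0 1 + R 1 0)/2)^2) + (25/24)*((R 0 1 + R 1 0)/2),
    (17/100 + 2*((R 0 1 + R 1 0)/2)^2) - (25/24)*((R 0 1 + R 1 0)/2),
    (17/100 + 2*((R 2 0 + R 0 2)/2)^2) + (25/24)*((R 2 0 + R 0 2)/2),
    (17/100 + 2*((R 2 0 + R 0 2)/2)^2) - (25/24)*((R 2 0 + R 0 2)/2),
    (17/100 + 2*((R 1 2 + R 2 1)/2)^2) + (25/24)*((R 1 2 + R 2 1)/2),
    (17/100 + 2*((R 1 2 + R 2 1)/2)^2) - (25/24)*((R 1 2 + R 2 1)/2)]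

lemma frob_sq (M : Matrix (Fin 3) (Fin 3) ℝ) : ∑ i, ∑ j, (M i j)^2 = ‖M‖^2 := by
  have h : ∀ x : ℝ, ‖x‖ ^ (2:ℝ) = x ^ 2 := by
    intro x
    rw [Real.norm_eq_abs, Real.rpow_two, sq_abs]
  rw [Matrix.frobenius_norm_def]
  rw [← Real.rpow_natCast (_ ^ (1/2 : ℝ)) 2, ← Real.rpow_mul (by positivity)]
  simp [h]

lemma key_ineq {R : Matrix (Fin 3) (Fin 3) ℝ} (hR : ‖R - 1‖ ≤ 1/2) :
    (R 0 0 - 1)^2 + (R 0 1)^2 + (R 0 2)^2 + (R 1 0)^2 + (R 1 1 - 1)^2 + (R 1 2)^2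
      + (R 2 0)^2 + (R 2 1)^2 + (R 2 2 - 1)^2 ≤ 1/4 := by
  have h := frob_sq (R - 1)
  simp [Fin.sum_univ_three, Matrix.sub_apply, Matrix.one_apply] at h
  nlinarith [norm_nonneg (R - 1), h]

set_option maxHeartbeats 1000000 in
lemma Gf_pos {R : Matrix (Fin 3) (Fin 3) ℝ} (hR : ‖R - 1‖ ≤ 1/2) (k : Fin 9) :
    0 < Gf R k := by
  have key := key_ineq hR
  fin_cases k <;> simp only [Gf] <;> norm_num <;>
    nlinarith [key, sq_nonneg (R 0 1 - R 1 0), sq_nonneg (R 0 2 - R 2 0),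
      sq_nonneg (R 1 2 - R 2 1),
      sq_nonneg (R 0 0 - 1 + 25/64), sq_nonneg (R 1 1 - 1 + 25/64), sq_nonneg (R 2 2 - 1 + 25/64),
      sq_nonneg (R 0 1 + R 1 0 + 25/48), sq_nonneg (R 0 1 + R 1 0 - 25/48),
      sq_nonneg (R 2 0 + R 0 2 + 25/48), sq_nonneg (R 2 0 + R 0 2 - 25/48),
      sq_nonneg (R 1 2 + R 2 1 + 25/48), sq_nonneg (R 1 2 + R 2 1 - 25/48)]

lemma fin3_mk_zero (h : 0 < 3) : (⟨0, h⟩ : Fin 3) = 0 := rfl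
lemma fin3_mk_one (h : 1 < 3) : (⟨1, h⟩ : Fin 3) = 1 := rfl
lemma fin3_mk_two (h : 2 < 3) : (⟨2, h⟩ : Fin 3) = 2 := rfl

set_option maxHeartbeats 2000000 in
lemma sum_id (R : Matrix (Fin 3) (Fin 3) ℝ) (hR : R.IsSymm) :
    R = ∑ k : Fin 9, Gf R k • tens (vv k) := by
  have h01 := hR.apply 0 1
  have h02 := hR.apply 0 2
  have h12 := hR.apply 1 2
  ext i j
  rw [Matrix.sum_apply]
  fin_cases i <;> fin_cases j <;>
  · simp only [fin3_mk_zero, fin3_mk_one, fin3_mk_two]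
    norm_num [Fin.sum_univ_succ, Gf, tens, vv, wv, Matrix.vecMulVec_apply, h01, h02, h12, Matrix.cons_val_two, Matrix.vecHead, Matrix.vecTail]
    first | rfl | ring

lemma contDiff_entry (i j : Fin 3) :
    ContDiff ℝ (⊤ : ℕ∞) (fun R : Matrix (Fin 3) (Fin 3) ℝ => R i j) :=
  (Matrix.entryLinearMap ℝ ℝ i j).toContinuousLinearMap.contDiff

lemma contDiff_vecCons {E : Type*} [NormedAddCommGroup E] [NormedSpace ℝ E]
    {m : ℕ} {f : E → ℝ} {g : E → Fin m → ℝ}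
    (hf : ContDiff ℝ (⊤ : ℕ∞) f) (hg : ContDiff ℝ (⊤ : ℕ∞) g) :
    ContDiff ℝ (⊤ : ℕ∞) (fun x => Matrix.vecCons (f x) (g x)) := by
  rw [contDiff_pi]
  intro i
  refine Fin.cases ?_ ?_ i
  · simpa using hf
  · intro j
    simpa [Matrix.cons_val_succ] using (contDiff_pi.mp hg j)

lemma contDiff_Gf_vec : ContDiff ℝ (⊤ : ℕ∞) (fun R => Gf R) := by
  have he := contDiff_entry
  have ht : ∀ i j : Fin 3,
      ContDiff ℝ (⊤ : ℕ∞) (fun R : Matrix (Fin 3) (Fin 3) ℝ => 17/100 + 2*((R i j + R j i)/2)^2) :=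
    fun i j => contDiff_const.add (contDiff_const.mul ((((he i j).add (he j i)).div_const 2).pow 2))
  have ha : ∀ i j : Fin 3,
      ContDiff ℝ (⊤ : ℕ∞) (fun R : Matrix (Fin 3) (Fin 3) ℝ => (25/24)*((R i j + R j i)/2)) :=
    fun i j => contDiff_const.mul (((he i j).add (he j i)).div_const 2)
  unfold Gf
  refine contDiff_vecCons (((he 0 0).sub (contDiff_const.mul (ht 0 1))).sub
      (contDiff_const.mul (ht 2 0))) ?_
  refine contDiff_vecCons (((he 1 1).sub (contDiff_const.mul (ht 0 1))).sub
      (contDiff_const.mul (ht 1 2))) ?_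
  refine contDiff_vecCons (((he 2 2).sub (contDiff_const.mul (ht 2 0))).sub
      (contDiff_const.mul (ht 1 2))) ?_
  refine contDiff_vecCons ((ht 0 1).add (ha 0 1)) ?_
  refine contDiff_vecCons ((ht 0 1).sub (ha 0 1)) ?_
  refine contDiff_vecCons ((ht 2 0).add (ha 2 0)) ?_
  refine contDiff_vecCons ((ht 2 0).sub (ha 2 0)) ?_
  refine contDiff_vecCons ((ht 1 2).add (ha 1 2)) ?_
  refine contDiff_vecCons ((ht 1 2).sub (ha 1 2)) ?_
  exact contDiff_const

lemma contDiff_Gf (k : Fin 9) : ContDiff ℝ (⊤ : ℕ∞) (fun R => Gf R k) :=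
  (ContinuousLinearMap.proj (R := ℝ) (φ := fun _ : Fin 9 => ℝ) k).contDiff.comp contDiff_Gf_vec

lemma norm_vv (k : Fin 9) : ‖vv k‖ = 1 := by
  fin_cases k <;>
  · rw [EuclideanSpace.norm_eq]
    norm_num [Fin.sum_univ_three, wv, Real.sqrt_eq_one, Matrix.cons_val_two, Matrix.vecHead, Matrix.vecTail]

lemma norm_uu (k : Fin 9) : ‖uu k‖ = 1 := by
  fin_cases k <;>
  · rw [EuclideanSpace.norm_eq]
    norm_num [Fin.sum_univ_three, uw, Real.sqrt_eq_one, Matrix.cons_val_two, Matrix.vecHead, Matrix.vecTail]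

lemma norm_cc (k : Fin 9) : ‖cc k‖ = 1 := by
  fin_cases k <;>
  · rw [EuclideanSpace.norm_eq]
    norm_num [Fin.sum_univ_three, cw, Real.sqrt_eq_one, Matrix.cons_val_two, Matrix.vecHead, Matrix.vecTail]

lemma ratVec_vv (k : Fin 9) : IsRatVec (vv k) := by
  intro j
  exact ⟨(wv k j : ℚ)/5, by push_cast; rfl⟩

lemma ratVec_uu (k : Fin 9) : IsRatVec (uu k) := by
  intro j
  exact ⟨(uw k j : ℚ)/5, by push_cast; rfl⟩

lemma ratVec_cc (k : Fin 9) : IsRatVec (cc k) := by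
  intro j
  exact ⟨(cw k j : ℚ)/5, by push_cast; rfl⟩

lemma inner_vv_uu (k : Fin 9) : (inner ℝ (vv k) (uu k) : ℝ) = 0 := by
  fin_cases k <;>
    norm_num [PiLp.inner_apply, Fin.sum_univ_three, wv, uw, RCLike.inner_apply, Matrix.cons_val_two, Matrix.vecHead, Matrix.vecTail]

lemma inner_vv_cc (k : Fin 9) : (inner ℝ (vv k) (cc k) : ℝ) = 0 := by
  fin_cases k <;>
    norm_num [PiLp.inner_apply, Fin.sum_univ_three, wv, cw, RCLike.inner_apply, Matrix.cons_val_two, Matrix.vecHead, Matrix.vecTail]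

lemma inner_uu_cc (k : Fin 9) : (inner ℝ (uu k) (cc k) : ℝ) = 0 := by
  fin_cases k <;>
    norm_num [PiLp.inner_apply, Fin.sum_univ_three, uw, cw, RCLike.inner_apply, Matrix.cons_val_two, Matrix.vecHead, Matrix.vecTail]

lemma inner_vv_vv (k : Fin 9) : (inner ℝ (vv k) (vv k) : ℝ) = 1 := by
  fin_cases k <;>
    norm_num [PiLp.inner_apply, Fin.sum_univ_three, wv, RCLike.inner_apply, Matrix.cons_val_two, Matrix.vecHead, Matrix.vecTail, norm_vv]

lemma inner_uu_uu (k : Fin 9) : (inner ℝ (uu k) (uu k) : ℝ) = 1 := by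
  fin_cases k <;>
    norm_num [PiLp.inner_apply, Fin.sum_univ_three, uw, RCLike.inner_apply, Matrix.cons_val_two, Matrix.vecHead, Matrix.vecTail, norm_uu]

lemma inner_cc_cc (k : Fin 9) : (inner ℝ (cc k) (cc k) : ℝ) = 1 := by
  fin_cases k <;>
    norm_num [PiLp.inner_apply, Fin.sum_univ_three, cw, RCLike.inner_apply, Matrix.cons_val_two, Matrix.vecHead, Matrix.vecTail, norm_cc]

lemma inner_uu_vv (k : Fin 9) : (inner ℝ (uu k) (vv k) : ℝ) = 0 := by
  rw [real_inner_comm]; exact inner_vv_uu k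

lemma inner_cc_vv (k : Fin 9) : (inner ℝ (cc k) (vv k) : ℝ) = 0 := by
  rw [real_inner_comm]; exact inner_vv_cc k

lemma inner_cc_uu (k : Fin 9) : (inner ℝ (cc k) (uu k) : ℝ) = 0 := by
  rw [real_inner_comm]; exact inner_uu_cc k

lemma orthonormal_triple (k : Fin 9) : Orthonormal ℝ ![vv k, uu k, cc k] := by
  rw [orthonormal_iff_ite]
  intro i j
  fin_cases i <;> fin_cases j <;>
    norm_num [inner_vv_vv k, inner_uu_uu k, inner_cc_cc k, inner_vv_uu k, inner_uu_vv k,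
      inner_vv_cc k, inner_cc_vv k, inner_uu_cc k, inner_cc_uu k, Fin.ext_iff, norm_vv k, norm_uu k, norm_cc k]

lemma span_triple (k : Fin 9) :
    Submodule.span ℝ {vv k, uu k, cc k} = ⊤ := by
  have hrange : Set.range ![vv k, uu k, cc k] = {vv k, uu k, cc k} := by
    rw [Matrix.range_cons, Matrix.range_cons, Matrix.range_cons_empty,
      Set.singleton_union, Set.singleton_union]
  rw [← hrange]
  refine (orthonormal_triple k).linearIndependent.span_eq_top_of_card_eq_finrank ?_
  simp

lemma intVec_smul5 (x : Fin 9 → Fin 3 → ℤ) (f : Fin 9 → E3')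
    (hf : ∀ k i, f k i = (x k i : ℝ)/5) (k : Fin 9) :
    IsIntVec (((5:ℕ) : ℝ) • f k) := by
  intro j
  refine ⟨x k j, ?_⟩
  have : (((5:ℕ):ℝ) • f k) j = 5 * ((x k j : ℝ)/5) := by
    rw [PiLp.smul_apply, hf k j]
    norm_num
  rw [this]
  ring

/-- **First geometric lemma of convex integration** (Lemma A.1 / Lemma 6.6 of [BV19]).
There is a finite set `Λ` of rational unit vectors and smooth functions `γ_ξ` on the closed
`1/2`-ball around the identity in the symmetric `3×3` matrices with
`R = ∑_{ξ∈Λ} γ_ξ(R)² (ξ⊗ξ)` there; moreover each `ξ ∈ Λ` admits a rational orthonormal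
completion `{ξ, A_ξ, ξ × A_ξ}` of `ℝ³`, and there is a smallest positive natural `n₀`
making all the vectors `n₀ξ, n₀A_ξ, n₀(ξ×A_ξ)` integral. -/
theorem geometric_lemma :
    ∃ (Λ : Finset E3') (γ : E3' → Matrix (Fin 3) (Fin 3) ℝ → ℝ),
      (∀ ξ ∈ Λ, ‖ξ‖ = 1 ∧ IsRatVec ξ) ∧
      (∀ ξ ∈ Λ, ContDiffOn ℝ (⊤ : ℕ∞) (γ ξ)
        (Metric.closedBall (1 : Matrix (Fin 3) (Fin 3) ℝ) (1/2))) ∧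
      (∀ R : Matrix (Fin 3) (Fin 3) ℝ, R.IsSymm → ‖R - 1‖ ≤ 1/2 →
        R = ∑ ξ ∈ Λ, (γ ξ R) ^ 2 • tens ξ) ∧
      (∃ A : E3' → E3',
        (∀ ξ ∈ Λ,
          ‖A ξ‖ = 1 ∧ IsRatVec (A ξ) ∧ (inner ℝ ξ (A ξ) : ℝ) = 0 ∧
          ‖cross3 ξ (A ξ)‖ = 1 ∧ IsRatVec (cross3 ξ (A ξ)) ∧
          Orthonormal ℝ ![ξ, A ξ, cross3 ξ (A ξ)] ∧
          Submodule.span ℝ {ξ, A ξ, cross3 ξ (A ξ)} = ⊤) ∧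
        (∃ nstar : ℕ,
          IsLeast {n : ℕ | 0 < n ∧ ∀ ξ ∈ Λ,
            IsIntVec ((n : ℝ) • ξ) ∧ IsIntVec ((n : ℝ) • A ξ) ∧
            IsIntVec ((n : ℝ) • cross3 ξ (A ξ))} nstar)) := by
  classical
  refine ⟨Finset.image vv Finset.univ, fun ξ R => Real.sqrt (Gf R (idx ξ)), ?_, ?_, ?_, ?_⟩
  · intro ξ hξ
    obtain ⟨k, -, rfl⟩ := Finset.mem_image.mp hξ
    exact ⟨norm_vv k, ratVec_vv k⟩
  · intro ξ hξ
    obtain ⟨k, -, rfl⟩ := Finset.mem_image.mp hξ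
    intro R hRball
    have hRn : ‖R - 1‖ ≤ 1/2 := by
      rw [← mem_closedBall_iff_norm]; exact hRball
    simp only [idx_vv]
    exact ((Real.contDiffAt_sqrt (Gf_pos hRn k).ne').comp R
      (contDiff_Gf k).contDiffAt).contDiffWithinAt
  · intro R hsymm hRn
    rw [Finset.sum_image (fun a _ b _ h => vv_inj h)]
    calc R = ∑ k : Fin 9, Gf R k • tens (vv k) := sum_id R hsymm
    _ = ∑ k : Fin 9, Real.sqrt (Gf R (idx (vv k))) ^ 2 • tens (vv k) := by
        refine Finset.sum_congr rfl fun k _ => ?_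
        rw [idx_vv, Real.sq_sqrt (Gf_pos hRn k).le]
  · refine ⟨fun ξ => uu (idx ξ), ?_, ⟨5, ⟨?_, ?_⟩, ?_⟩⟩
    · intro ξ hξ
      obtain ⟨k, -, rfl⟩ := Finset.mem_image.mp hξ
      simp only [idx_vv, cross_vv k]
      exact ⟨norm_uu k, ratVec_uu k, inner_vv_uu k, norm_cc k, ratVec_cc k,
        by rw [← cross_vv k]; exact (cross_vv k) ▸ orthonormal_triple k,
        span_triple k⟩
    · norm_num
    · intro ξ hξ
      obtain ⟨k, -, rfl⟩ := Finset.mem_image.mp hξ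
      simp only [idx_vv, cross_vv k]
      exact ⟨intVec_smul5 wv vv (fun k i => rfl) k, intVec_smul5 uw uu (fun k i => rfl) k,
        intVec_smul5 cw cc (fun k i => rfl) k⟩
    · intro n hn
      obtain ⟨hpos, h⟩ := hn
      have hmem : vv 3 ∈ Finset.image vv Finset.univ :=
        Finset.mem_image_of_mem vv (Finset.mem_univ 3)
      obtain ⟨m, hm⟩ := (h (vv 3) hmem).1 0
      have h0 : ((n:ℝ) • vv 3) 0 = (n:ℝ) * (3/5) := by
        rw [PiLp.smul_apply]
        norm_num [show wv 3 0 = 3 from rfl]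
      have hr : 3 * (n:ℝ) = 5 * m := by
        rw [h0] at hm
        linarith
      have hz : 3 * (n:ℤ) = 5 * m := by exact_mod_cast hr
      omega

end
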